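/- Let x₁, x₂ ∈ ℝ⁶ with Q(x₁) = Q(x₂) = 0 and ⟨x₁,x₂⟩_Q = 0 (so x₁, x₂ span an isotropic subspace). For any real 2×2 matrix a = (a_{ij}) set x'_i = a_{i1} x₁ + a_{i2} x₂ (i = 1,2). Then X(x'₁)·conj(X(x'₂)) = det(a) · X(x₁)·conj(X(x₂)); in particular the range of X(x₁)·conj(X(x₂)) depends only on the span of x₁, x₂. -/
import Mathlib


open Matrix Complex

/-- The six antilinear-Clifford matrices Γ₁,…,Γ₆ (indexed 0,…,5). -/
noncomputable def Gam : Fin 6 → Matrix (Fin 4) (Fin 4) ℂ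
  | 0 => !![0, 0, I, 0; 0, 0, 0, -I; I, 0, 0, 0; 0, -I, 0, 0]
  | 1 => !![0, 0, 1, 0; 0, 0, 0, 1; 1, 0, 0, 0; 0, 1, 0, 0]
  | 2 => !![0, 0, 0, -I; 0, 0, -I, 0; 0, -I, 0, 0; -I, 0, 0, 0]
  | 3 => !![0, I, 0, 0; -I, 0, 0, 0; 0, 0, 0, I; 0, 0, -I, 0]
  | 4 => !![0, 0, 0, -1; 0, 0, 1, 0; 0, 1, 0, 0; -1, 0, 0, 0]
  | 5 => !![0, 1, 0, 0; -1, 0, 0, 0; 0, 0, 0, -1; 0, 0, 1, 0]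

/-- X(x) = Σ x^α Γ_α. -/
noncomputable def Xm (x : Fin 6 → ℝ) : Matrix (Fin 4) (Fin 4) ℂ :=
  ∑ α : Fin 6, (x α : ℂ) • Gam α

/-- The quadratic form of signature (4,2). -/
def Qform (x : Fin 6 → ℝ) : ℝ :=
  x 0 ^ 2 + x 1 ^ 2 + x 2 ^ 2 - x 3 ^ 2 + x 4 ^ 2 - x 5 ^ 2

/-- The bilinear form of signature (4,2). -/
def Qbil (x y : Fin 6 → ℝ) : ℝ :=
  x 0 * y 0 + x 1 * y 1 + x 2 * y 2 - x 3 * y 3 + x 4 * y 4 - x 5 * y 5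

/-- G = diag(1,1,-1,-1) as a function. -/
def Gv : Fin 4 → ℝ := ![1, 1, -1, -1]

/-- The pseudo-Hermitian form of signature (2,2) on ℂ⁴. -/
def herm (u v : Fin 4 → ℂ) : ℂ :=
  u 0 * starRingEnd ℂ (v 0) + u 1 * starRingEnd ℂ (v 1)
    - u 2 * starRingEnd ℂ (v 2) - u 3 * starRingEnd ℂ (v 3)

/-- The Levi-Civita symbol on four indices, ε^{0123} = 1. -/
noncomputable def eps (i j k l : Fin 4) : ℝ :=
  (((j : ℕ) : ℝ) - ((i : ℕ) : ℝ)) * (((k : ℕ) : ℝ) - ((i : ℕ) : ℝ)) *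
    (((l : ℕ) : ℝ) - ((i : ℕ) : ℝ)) * (((k : ℕ) : ℝ) - ((j : ℕ) : ℝ)) *
    (((l : ℕ) : ℝ) - ((j : ℕ) : ℝ)) * (((l : ℕ) : ℝ) - ((k : ℕ) : ℝ)) / 12

/-- The six antisymmetric matrices Σ₁,…,Σ₆ (indexed 0,…,5). -/
noncomputable def Sig : Fin 6 → Matrix (Fin 4) (Fin 4) ℂ
  | 0 => !![0, 0, -I, 0; 0, 0, 0, I; I, 0, 0, 0; 0, -I, 0, 0]
  | 1 => !![0, 0, -1, 0; 0, 0, 0, -1; 1, 0, 0, 0; 0, 1, 0, 0]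
  | 2 => !![0, 0, 0, I; 0, 0, I, 0; 0, -I, 0, 0; -I, 0, 0, 0]
  | 3 => !![0, I, 0, 0; -I, 0, 0, 0; 0, 0, 0, -I; 0, 0, I, 0]
  | 4 => !![0, 0, 0, 1; 0, 0, -1, 0; 0, 1, 0, 0; -1, 0, 0, 0]
  | 5 => !![0, 1, 0, 0; -1, 0, 0, 0; 0, 0, 0, 1; 0, 0, -1, 0]

/-- Σ(x) = Σ x^α Σ_α. -/
noncomputable def Sm (x : Fin 6 → ℝ) : Matrix (Fin 4) (Fin 4) ℂ :=
  ∑ α : Fin 6, (x α : ℂ) • Sig α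

/-- The antilinear Hodge star on antisymmetric 4×4 complex matrices. -/
noncomputable def hstar (A : Matrix (Fin 4) (Fin 4) ℂ) : Matrix (Fin 4) (Fin 4) ℂ :=
  Matrix.of fun i j =>
    (1 / 2 : ℂ) * ∑ k : Fin 4, ∑ l : Fin 4,
      ((eps i j k l : ℝ) : ℂ) * ((Gv k : ℝ) : ℂ) * ((Gv l : ℝ) : ℂ) * starRingEnd ℂ (A k l)


lemma Xm_eq (x : Fin 6 → ℝ) : Xm x =
    !![0, (x 5) + I*(x 3), I*(x 0) + (x 1), -(x 4) - I*(x 2);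
       -(x 5) - I*(x 3), 0, (x 4) - I*(x 2), -I*(x 0) + (x 1);
       I*(x 0) + (x 1), (x 4) - I*(x 2), 0, I*(x 3) - (x 5);
       -(x 4)-I*(x 2), -I*(x 0)+(x 1), (x 5)-I*(x 3), 0] := by
  ext i j
  fin_cases i <;> fin_cases j <;>
    (simp [Xm, Fin.sum_univ_six, Matrix.sum_apply, Matrix.smul_apply, Gam,
      Matrix.vecHead, Matrix.vecTail, Function.comp]; try ring)

set_option maxHeartbeats 1600000 in
lemma anticomm (x y : Fin 6 → ℝ) :
    Xm x * (Xm y).map (starRingEnd ℂ) + Xm y * (Xm x).map (starRingEnd ℂ)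
      = ((2 * Qbil x y : ℝ) : ℂ) • 1 := by
  rw [Xm_eq x, Xm_eq y]
  ext i j
  fin_cases i <;> fin_cases j <;>
    (simp [Matrix.mul_apply, Fin.sum_univ_four, Matrix.map_apply, Matrix.one_apply,
       Matrix.vecMul, dotProduct, Matrix.vecHead, Matrix.vecTail, Function.comp,
       Qbil, map_add, _root_.map_mul, map_sub, map_neg, Complex.conj_I,
       Complex.conj_ofReal]; ring_nf; try simp [Complex.I_sq]; try ring)

lemma Xm_comb (c d : ℝ) (x y : Fin 6 → ℝ) :
    Xm (c • x + d • y) = (c : ℂ) • Xm x + (d : ℂ) • Xm y := by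
  unfold Xm
  rw [Finset.smul_sum, Finset.smul_sum, ← Finset.sum_add_distrib]
  refine Finset.sum_congr rfl fun α _ => ?_
  have : ((c • x + d • y) α : ℂ) = (c : ℂ) * (x α : ℂ) + (d : ℂ) * (y α : ℂ) := by
    simp only [Pi.add_apply, Pi.smul_apply, smul_eq_mul]; push_cast; ring
  rw [this, add_smul, smul_smul, smul_smul]

lemma map_conj_add (M N : Matrix (Fin 4) (Fin 4) ℂ) :
    (M + N).map (starRingEnd ℂ) = M.map (starRingEnd ℂ) + N.map (starRingEnd ℂ) := by
  ext i j
  simp [Matrix.map_apply]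

lemma map_conj_smul (r : ℝ) (M : Matrix (Fin 4) (Fin 4) ℂ) :
    ((r : ℂ) • M).map (starRingEnd ℂ) = (r : ℂ) • M.map (starRingEnd ℂ) := by
  ext i j
  simp [Matrix.map_apply, Complex.conj_ofReal]

lemma mulselfzero (x : Fin 6 → ℝ) (h : Qform x = 0) :
    Xm x * (Xm x).map (starRingEnd ℂ) = 0 := by
  have hq : Qbil x x = 0 := by
    have : Qbil x x = Qform x := by simp [Qbil, Qform]; ring
    rw [this, h]
  have h2 := anticomm x x
  rw [hq] at h2
  simp only [mul_zero, Complex.ofReal_zero, zero_smul] at h2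
  have h3 : (2 : ℂ) • (Xm x * (Xm x).map (starRingEnd ℂ)) = 0 := by
    rw [two_smul]; exact h2
  have := smul_eq_zero.mp h3
  simpa using this

/-- For null, mutually orthogonal x₁, x₂ and any real 2×2 matrix a, setting
x'_i = a_{i1}x₁ + a_{i2}x₂ one has X(x'₁)·conj(X(x'₂)) = det(a)·X(x₁)·conj(X(x₂));
in particular the range depends only on the span of x₁, x₂. -/
theorem basis_change_det (x₁ x₂ : Fin 6 → ℝ)
    (h₁ : Qform x₁ = 0) (h₂ : Qform x₂ = 0) (h₁₂ : Qbil x₁ x₂ = 0) :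
    ∀ a : Matrix (Fin 2) (Fin 2) ℝ,
      Xm (a 0 0 • x₁ + a 0 1 • x₂) * (Xm (a 1 0 • x₁ + a 1 1 • x₂)).map (starRingEnd ℂ) =
        ((a.det : ℝ) : ℂ) • (Xm x₁ * (Xm x₂).map (starRingEnd ℂ)) := by
  intro a
  have h11 : Xm x₁ * (Xm x₁).map (starRingEnd ℂ) = 0 := mulselfzero x₁ h₁
  have h22 : Xm x₂ * (Xm x₂).map (starRingEnd ℂ) = 0 := mulselfzero x₂ h₂
  have h21 : Xm x₂ * (Xm x₁).map (starRingEnd ℂ)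
      = -(Xm x₁ * (Xm x₂).map (starRingEnd ℂ)) := by
    have h2 := anticomm x₁ x₂
    rw [h₁₂] at h2
    simp only [mul_zero, Complex.ofReal_zero, zero_smul] at h2
    exact eq_neg_of_add_eq_zero_right h2
  rw [Xm_comb, Xm_comb, map_conj_add, map_conj_smul, map_conj_smul]
  simp only [add_mul, mul_add, smul_mul_assoc, mul_smul_comm, smul_smul,
    h11, h22, h21, smul_zero, smul_neg, Matrix.det_fin_two]
  push_cast
  module
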